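/- Let a : 𝕋 → ℝ be continuous and α of constant type, and suppose log a ∈ H²(𝕋) (a is positive). Then there exists K > 0 such that for all n ≥ 1 and all θ, ∏_{k=0}^{n−1} a(θ + 2πkα) ≤ K e^{n χ}, where χ = (1/2π)∫_0^{2π} log a. -/

import Mathlib

/-!
Expanding `log a` in its Fourier series, the `n`-th Birkhoff sum of `log a` over the rotation by
`α` equals `n c₀ + ∑_{m ≠ 0} c_m e^{imθ} ∑_{k<n} e^{2πikmα}`. For `α` of constant type,
`mα` stays at distance `≥ δ/|m|` from the integers, so each geometric sum is at most `|m|/(2δ)`;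
the `H²` condition makes `∑ |m| |c_m|` finite. Hence the Birkhoff sums stay within a fixed
distance `B` of `n Re c₀`, uniformly in `n` and `θ`. Integrating over a period gives
`n Re c₀ ≤ nχ + B`, and exponentiating gives the bound with `K = e^{2B}`.
-/

open Real Finset

def IsConstantType (α δ : ℝ) : Prop :=
  ∀ p : ℤ, ∀ q : ℕ, 1 ≤ q → |α - (p : ℝ) / (q : ℝ)| ≥ δ / (q : ℝ) ^ 2

lemma two_mul_abs_sub_round_le_abs_sin_pi_mul (x : ℝ) : 2 * |x - round x| ≤ |sin (π * x)| := by
  have hshift : sin (π * x) = (-1) ^ round x * sin (π * (x - round x)) := by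
    rw [← sin_add_int_mul_pi]; ring_nf
  have hsmall : |π * (x - round x)| ≤ π / 2 := by
    rw [abs_mul, abs_of_pos pi_pos]; nlinarith [abs_sub_round x, pi_pos]
  have hjordan := mul_abs_le_abs_sin hsmall
  rw [abs_mul, abs_of_pos pi_pos, ← mul_assoc, div_mul_cancel₀ _ pi_pos.ne'] at hjordan
  rwa [hshift, abs_mul, abs_neg_one_zpow, one_mul]

lemma four_mul_abs_sub_round_le_norm_exp_sub_one (x : ℝ) :
    4 * |x - round x| ≤ ‖Complex.exp (↑(2 * π * x) * Complex.I) - 1‖ := by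
  rw [mul_comm _ Complex.I, Complex.norm_exp_I_mul_ofReal_sub_one, norm_mul, Real.norm_eq_abs,
    Real.norm_eq_abs, abs_two, show 2 * π * x / 2 = π * x by ring]
  linarith [two_mul_abs_sub_round_le_abs_sin_pi_mul x]

lemma norm_geom_sum_le_two_div {𝕜 : Type*} [NormedDivisionRing 𝕜] {z : 𝕜} (hz : ‖z‖ ≤ 1)
    (hz1 : z ≠ 1) (n : ℕ) : ‖∑ k ∈ range n, z ^ k‖ ≤ 2 / ‖z - 1‖ := by
  rw [geom_sum_eq hz1, norm_div]
  gcongr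
  calc ‖z ^ n - 1‖ ≤ ‖z ^ n‖ + ‖(1 : 𝕜)‖ := norm_sub_le _ _
    _ ≤ 1 + 1 := by
      rw [norm_pow, norm_one]; gcongr; exact pow_le_one₀ (norm_nonneg z) hz
    _ = 2 := one_add_one_eq_two

lemma summable_norm_mul_abs_of_summable_abs_pow_four_mul_sq {E : Type*}
    [SeminormedAddCommGroup E] {c : ℤ → E} (h : Summable fun m : ℤ => |(m : ℝ)| ^ 4 * ‖c m‖ ^ 2) :
    Summable fun m : ℤ => ‖c m‖ * |(m : ℝ)| := by
  refine .of_nonneg_of_le (fun m => by positivity) (fun m => ?_)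
    ((h.add (summable_one_div_int_pow.2 one_lt_two)).div_const 2)
  rcases eq_or_ne m 0 with rfl | hm
  · simp
  · have hm0 : 0 < |(m : ℝ)| := by positivity
    have hfactor : ‖c m‖ * |(m : ℝ)| = (|(m : ℝ)| ^ 2 * ‖c m‖) * (1 / |(m : ℝ)|) := by
      field_simp
    have hamgm := two_mul_le_add_sq (|(m : ℝ)| ^ 2 * ‖c m‖) (1 / |(m : ℝ)|)
    have hsq : (|(m : ℝ)| ^ 2 * ‖c m‖) ^ 2 + (1 / |(m : ℝ)|) ^ 2
        = |(m : ℝ)| ^ 4 * ‖c m‖ ^ 2 + 1 / (m : ℝ) ^ 2 := by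
      rw [div_pow, one_pow, ← sq_abs (m : ℝ)]; ring
    rw [hfactor]
    linarith

lemma summable_norm_of_summable_norm_mul_abs {E : Type*} [SeminormedAddCommGroup E] {c : ℤ → E}
    (hc : Summable fun m : ℤ => ‖c m‖ * |(m : ℝ)|) : Summable fun m : ℤ => ‖c m‖ := by
  refine .of_norm_bounded_eventually hc ((Filter.eventually_cofinite_ne 0).mono fun m hm => ?_)
  have h1 : (1 : ℝ) ≤ |(m : ℝ)| := by exact_mod_cast Int.one_le_abs hm
  rw [norm_norm]
  exact le_mul_of_one_le_right (norm_nonneg _) h1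

lemma Function.Periodic.intervalIntegral_sum_comp_add {g : ℝ → ℝ} {T : ℝ}
    (hg : Function.Periodic g T) (hgc : Continuous g) {ι : Type*} (s : Finset ι) (β : ι → ℝ) :
    ∫ θ in (0 : ℝ)..T, ∑ i ∈ s, g (θ + β i) = s.card * ∫ θ in (0 : ℝ)..T, g θ := by
  have hshift (i : ι) : ∫ θ in (0 : ℝ)..T, g (θ + β i) = ∫ θ in (0 : ℝ)..T, g θ := by
    rw [intervalIntegral.integral_comp_add_right, zero_add, add_comm T,
      hg.intervalIntegral_add_eq (β i) 0, zero_add]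
  rw [intervalIntegral.integral_finsetSum (f := fun i θ => g (θ + β i)) fun i _ =>
      (hgc.comp (continuous_add_const (β i))).intervalIntegrable _ _,
    sum_congr rfl fun i _ => hshift i, sum_const, nsmul_eq_mul]

lemma le_intervalIntegral_div_of_forall_le {f : ℝ → ℝ} {T c : ℝ} (hT : 0 < T)
    (hf : IntervalIntegrable f MeasureTheory.volume 0 T) (h : ∀ x, c ≤ f x) :
    c ≤ (∫ x in (0 : ℝ)..T, f x) / T := by
  have hlow := intervalIntegral.integral_mono_on hT.le intervalIntegrable_const hf fun x _ => h x
  rw [intervalIntegral.integral_const, smul_eq_mul, sub_zero] at hlow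
  rwa [le_div_iff₀ hT, mul_comm]

namespace IsConstantType

variable {α δ : ℝ} (hα : IsConstantType α δ)
include hα

lemma div_le_abs_natCast_mul_sub {q : ℕ} (hq : 1 ≤ q) (p : ℤ) : δ / q ≤ |q * α - p| := by
  have hq0 : (0 : ℝ) < q := by exact_mod_cast hq
  calc δ / q = q * (δ / (q : ℝ) ^ 2) := by field_simp
    _ ≤ q * |α - p / q| := mul_le_mul_of_nonneg_left (hα p q hq) hq0.le
    _ = |q * α - p| := by
      rw [← abs_of_pos hq0, ← abs_mul, abs_of_pos hq0, mul_sub, mul_div_cancel₀ _ hq0.ne']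

lemma div_le_abs_intCast_mul_sub {m : ℤ} (hm : m ≠ 0) (p : ℤ) :
    δ / |(m : ℝ)| ≤ |m * α - p| := by
  obtain ⟨q, rfl | rfl⟩ := Int.eq_nat_or_neg m
  · simpa using hα.div_le_abs_natCast_mul_sub (by omega) p
  · have := hα.div_le_abs_natCast_mul_sub (q := q) (by omega) (-p)
    rw [← abs_neg] at this
    simpa [neg_add_eq_sub] using this

lemma norm_geom_sum_exp_le (hδ : 0 < δ) {m : ℤ} (hm : m ≠ 0) (n : ℕ) :
    ‖∑ k ∈ range n, Complex.exp (↑(2 * π * (m * α)) * Complex.I) ^ k‖ ≤ |(m : ℝ)| / (2 * δ) := by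
  set x : ℝ := m * α
  have hm0 : 0 < |(m : ℝ)| := by positivity
  have hfar : 4 * δ / |(m : ℝ)| ≤ ‖Complex.exp (↑(2 * π * x) * Complex.I) - 1‖ :=
    calc 4 * δ / |(m : ℝ)| = 4 * (δ / |(m : ℝ)|) := by ring
      _ ≤ 4 * |x - round x| := by gcongr; exact hα.div_le_abs_intCast_mul_sub hm _
      _ ≤ _ := four_mul_abs_sub_round_le_norm_exp_sub_one x
  have hpos : 0 < 4 * δ / |(m : ℝ)| := by positivity
  have hz1 : Complex.exp (↑(2 * π * x) * Complex.I) ≠ 1 := fun h => by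
    rw [h, sub_self, norm_zero] at hfar; linarith
  calc _ ≤ 2 / ‖Complex.exp (↑(2 * π * x) * Complex.I) - 1‖ :=
        norm_geom_sum_le_two_div (Complex.norm_exp_ofReal_mul_I _).le hz1 n
    _ ≤ 2 / (4 * δ / |(m : ℝ)|) := by gcongr
    _ = |(m : ℝ)| / (2 * δ) := by field_simp; ring

lemma norm_sum_fourier_rotation_sub_le (hδ : 0 < δ) {c : ℤ → ℂ}
    (hc : Summable fun m : ℤ => ‖c m‖ * |(m : ℝ)|) (n : ℕ) (θ : ℝ) :
    ‖∑ k ∈ range n, ∑' m : ℤ, c m * Complex.exp (m * ↑(θ + 2 * π * k * α) * Complex.I)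
        - n * c 0‖ ≤ (∑' m : ℤ, ‖c m‖ * |(m : ℝ)|) / (2 * δ) := by
  set z : ℤ → ℂ := fun m => Complex.exp (↑(2 * π * (m * α)) * Complex.I)
  set T : ℤ → ℂ := fun m => c m * Complex.exp (m * θ * Complex.I) * ∑ k ∈ range n, z m ^ k
  have hc0 := summable_norm_of_summable_norm_mul_abs hc
  have hnorm_exp (m : ℤ) (x : ℝ) : ‖Complex.exp (m * x * Complex.I)‖ = 1 := by
    rw [Complex.norm_exp]; simp
  have hshift (m : ℤ) (k : ℕ) : c m * Complex.exp (m * ↑(θ + 2 * π * k * α) * Complex.I)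
      = c m * Complex.exp (m * θ * Complex.I) * z m ^ k := by
    rw [mul_assoc (c m), ← Complex.exp_nat_mul, ← Complex.exp_add]
    push_cast; ring_nf
  have hswap : ∑ k ∈ range n, ∑' m : ℤ, c m * Complex.exp (m * ↑(θ + 2 * π * k * α) * Complex.I)
      = ∑' m, T m := by
    rw [← Summable.tsum_finsetSum fun k _ =>
      .of_norm (hc0.congr fun m => by rw [norm_mul, hnorm_exp, mul_one])]
    simp only [T, hshift, mul_sum]
  have hT : Summable T :=
    .of_norm_bounded (g := fun m => ‖c m‖ * n) (hc0.mul_right (n : ℝ)) fun m => by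
      simp only [T, norm_mul, hnorm_exp, mul_one]
      gcongr
      exact (norm_sum_le _ _).trans (by simp only [z, norm_pow, Complex.norm_exp_ofReal_mul_I,
        one_pow, sum_const, card_range, nsmul_eq_mul, mul_one, le_refl])
  rw [hswap, ← tsum_pi_single (0 : ℤ) ((n : ℂ) * c 0),
    ← hT.tsum_sub (hasSum_pi_single _ _).summable]
  refine tsum_of_norm_bounded (hc.hasSum.div_const _) fun m => ?_
  rcases eq_or_ne m 0 with rfl | hm
  · simp [T, z, mul_comm]
  · simp only [T, Pi.single_apply, hm, if_false, sub_zero, norm_mul, hnorm_exp, mul_one,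
      mul_div_assoc]
    gcongr
    exact hα.norm_geom_sum_exp_le hδ hm n

end IsConstantType

/-- For `a` positive with `log a ∈ H²(𝕋)` and α of constant type, the Birkhoff
products of `a` are bounded by `K e^{nχ}` uniformly in θ. -/
theorem birkhoff_product_bound (α δ : ℝ) (hδ : 0 < δ)
    (hα : ∀ p : ℤ, ∀ q : ℕ, 1 ≤ q → |α - (p : ℝ) / (q : ℝ)| ≥ δ / (q : ℝ) ^ 2)
    (a : ℝ → ℝ) (ha : Continuous a) (haper : Function.Periodic a (2 * π))
    (hapos : ∀ θ, 0 < a θ)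
    (c : ℤ → ℂ)
    (hH2 : Summable (fun m : ℤ => |(m : ℝ)| ^ 4 * ‖c m‖ ^ 2))
    (hrep : ∀ θ : ℝ,
      (Real.log (a θ) : ℂ) = ∑' m : ℤ, c m * Complex.exp ((m : ℂ) * θ * Complex.I))
    (χ : ℝ) (hχ : χ = (1 / (2 * π)) * ∫ θ in (0 : ℝ)..(2 * π), Real.log (a θ)) :
    ∃ K : ℝ, 0 < K ∧ ∀ n : ℕ, 1 ≤ n → ∀ θ : ℝ,
      ∏ k ∈ Finset.range n, a (θ + 2 * π * k * α) ≤ K * Real.exp (n * χ) := by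
  have hc := summable_norm_mul_abs_of_summable_abs_pow_four_mul_sq hH2
  set B := (∑' m : ℤ, ‖c m‖ * |(m : ℝ)|) / (2 * δ)
  have hlog : Continuous fun θ => log (a θ) := ha.log fun θ => (hapos θ).ne'
  set S : ℕ → ℝ → ℝ := fun n θ => ∑ k ∈ range n, log (a (θ + 2 * π * k * α))
  have hdev (n : ℕ) (θ : ℝ) : |S n θ - n * (c 0).re| ≤ B := by
    have h := IsConstantType.norm_sum_fourier_rotation_sub_le hα hδ hc n θ
    simp only [← hrep] at h
    calc |S n θ - n * (c 0).re| = |((S n θ : ℂ) - n * c 0).re| := by simp [S]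
      _ ≤ B := (Complex.abs_re_le_norm _).trans (by simpa [S] using h)
  have hmean (n : ℕ) : n * (c 0).re ≤ n * χ + B := by
    have hint : ∫ θ in (0 : ℝ)..2 * π, S n θ = n * (2 * π * χ) := by
      have h := (haper.comp log).intervalIntegral_sum_comp_add hlog (range n)
        fun k : ℕ => 2 * π * k * α
      simp only [Function.comp_apply, card_range] at h
      simp only [S, h, hχ]
      field_simp
    have hSint : IntervalIntegrable (S n) MeasureTheory.volume 0 (2 * π) :=
      (continuous_finsetSum _ fun k _ => hlog.comp (continuous_add_const _)).intervalIntegrable _ _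
    have hlow := le_intervalIntegral_div_of_forall_le two_pi_pos hSint
      fun θ => (by linarith [(abs_le.1 (hdev n θ)).1] : n * (c 0).re - B ≤ S n θ)
    rw [hint, mul_div_assoc, mul_div_cancel_left₀ _ two_pi_pos.ne'] at hlow
    linarith
  refine ⟨exp (2 * B), exp_pos _, fun n _ θ => ?_⟩
  calc ∏ k ∈ range n, a (θ + 2 * π * k * α) = exp (S n θ) := by
        rw [exp_sum]; exact prod_congr rfl fun k _ => (exp_log (hapos _)).symm
    _ ≤ exp (2 * B + n * χ) := exp_le_exp.2 (by linarith [(abs_le.1 (hdev n θ)).2, hmean n])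
    _ = exp (2 * B) * exp (n * χ) := exp_add _ _
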